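/- arXiv:2501.00932 — 3 statements merged into one kernel-verified Lean document; each statement's English description precedes it below -/
import Mathlib

section
/- Let W, W̃ ∈ ℂ^n and W', W̃' ∈ ℂ^{n'}, and suppose d := min{|a - b| : a a coordinate of W⊔W', b a coordinate of W̃⊔W̃'} > 0. Then the Cauchy determinant of the concatenated vectors satisfies |det[1/((W⊔W')_i − (W̃⊔W̃')_j)]_{i,j=1}^{n+n'}| ≤ n^{n/2} · (n')^{n'/2} · 2^{(n+n')/2} · d^{-(n+n')}. -/
/-! Every entry of the Cauchy matrix has modulus at most `d⁻¹`, so each row has Euclidean norm at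
most `√N d⁻¹` (`N = n + n'`) and Hadamard's inequality bounds the determinant by `N^{N/2} d^{-N}`.
Hadamard's inequality comes from Gram–Schmidt: in the orthonormalisation `g` of the rows `v`, the
coefficient matrix of `v` is triangular with diagonal `⟪g i, v i⟫`, of modulus at most `‖v i‖`.
Finally, convexity of `t ↦ t log t` at the midpoint of `n` and `n'` gives
`((n + n')/2)^{(n+n')/2} ≤ n^{n/2} n'^{n'/2}`, i.e. `N^{N/2} ≤ n^{n/2} n'^{n'/2} 2^{N/2}`. -/

open InnerProductSpace Real

section Hadamard

variable {𝕜 : Type*} [RCLike 𝕜] {E : Type*} [NormedAddCommGroup E] [InnerProductSpace 𝕜 E]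

theorem OrthonormalBasis.norm_det_le_prod_norm_of_linearOrder {ι : Type*} [Fintype ι]
    [DecidableEq ι] [LinearOrder ι] [LocallyFiniteOrderBot ι] [WellFoundedLT ι]
    (b : OrthonormalBasis ι 𝕜 E) (v : ι → E) : ‖b.toBasis.det v‖ ≤ ∏ i, ‖v i‖ := by
  have := b.toBasis.finiteDimensional_of_finite
  have hdim : Module.finrank 𝕜 E = Fintype.card ι := Module.finrank_eq_card_basis b.toBasis
  set g := gramSchmidtOrthonormalBasis hdim v
  have hchange : b.toBasis.det v = b.toBasis.det g * g.toBasis.det v := by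
    conv_lhs => rw [b.toBasis.det.eq_smul_basis_det g.toBasis]
    simp
  rw [hchange, norm_mul, b.det_to_matrix_orthonormalBasis, one_mul,
    gramSchmidtOrthonormalBasis_det, norm_prod]
  gcongr with i
  calc ‖⟪g i, v i⟫_𝕜‖ ≤ ‖g i‖ * ‖v i‖ := norm_inner_le_norm _ _
    _ = ‖v i‖ := by rw [g.orthonormal.1 i, one_mul]

theorem OrthonormalBasis.norm_det_le_prod_norm {ι : Type*} [Fintype ι] [DecidableEq ι]
    (b : OrthonormalBasis ι 𝕜 E) (v : ι → E) : ‖b.toBasis.det v‖ ≤ ∏ i, ‖v i‖ := by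
  let e := Fintype.equivFin ι
  have := (b.reindex e).norm_det_le_prod_norm_of_linearOrder (v ∘ e.symm)
  rw [OrthonormalBasis.reindex_toBasis, Module.Basis.det_reindex, Function.comp_assoc,
    e.symm_comp_self, Function.comp_id] at this
  simpa only [Function.comp_apply, e.symm.prod_comp (fun i => ‖v i‖)] using this

theorem Matrix.norm_det_le_prod_norm_row {ι : Type*} [Fintype ι] [DecidableEq ι]
    (M : Matrix ι ι 𝕜) : ‖M.det‖ ≤ ∏ i, ‖(WithLp.toLp 2 (M i) : EuclideanSpace 𝕜 ι)‖ := by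
  have : M.det = (EuclideanSpace.basisFun ι 𝕜).toBasis.det (fun i => WithLp.toLp 2 (M i)) := by
    rw [Module.Basis.det_apply, ← Matrix.det_transpose]
    rfl
  rw [this]
  exact OrthonormalBasis.norm_det_le_prod_norm _ _

theorem EuclideanSpace.norm_le_sqrt_card_mul {ι : Type*} [Fintype ι] (x : EuclideanSpace 𝕜 ι)
    {C : ℝ} (hC : ∀ i, ‖x i‖ ≤ C) : ‖x‖ ≤ √(Fintype.card ι) * C := by
  cases isEmpty_or_nonempty ι with
  | inl _ => simp [EuclideanSpace.norm_eq]
  | inr h =>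
    obtain ⟨i₀⟩ := h
    have hC₀ : 0 ≤ C := (norm_nonneg _).trans (hC i₀)
    rw [EuclideanSpace.norm_eq, ← sqrt_sq hC₀, ← sqrt_mul (Nat.cast_nonneg _)]
    gcongr
    calc ∑ i, ‖x i‖ ^ 2 ≤ ∑ _i : ι, C ^ 2 := by gcongr with i; exact hC i
      _ = _ := by simp

theorem Matrix.norm_det_le_of_forall_norm_le {ι : Type*} [Fintype ι] [DecidableEq ι]
    (M : Matrix ι ι 𝕜) {C : ℝ} (hC : ∀ i j, ‖M i j‖ ≤ C) :
    ‖M.det‖ ≤ (Fintype.card ι : ℝ) ^ ((Fintype.card ι : ℝ) / 2) * C ^ Fintype.card ι := by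
  calc ‖M.det‖ ≤ ∏ i, ‖(WithLp.toLp 2 (M i) : EuclideanSpace 𝕜 ι)‖ := M.norm_det_le_prod_norm_row
    _ ≤ ∏ _i : ι, √(Fintype.card ι) * C := by
      gcongr with i
      exact EuclideanSpace.norm_le_sqrt_card_mul _ (hC i)
    _ = _ := by
      rw [Finset.prod_const, Finset.card_univ, mul_pow, sqrt_eq_rpow, ← rpow_natCast,
        ← rpow_mul (Nat.cast_nonneg _), one_div_mul_eq_div]

end Hadamard

theorem Real.rpow_self_mul_eq_exp {x : ℝ} (hx : 0 ≤ x) (c : ℝ) :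
    x ^ (x * c) = exp (x * log x * c) := by
  rcases hx.eq_or_lt with rfl | hx
  · simp
  · rw [rpow_def_of_pos hx]; ring_nf

theorem Real.add_div_two_rpow_add_div_two_le {x y : ℝ} (hx : 0 ≤ x) (hy : 0 ≤ y) :
    ((x + y) / 2) ^ ((x + y) / 2) ≤ x ^ (x / 2) * y ^ (y / 2) := by
  have hconv := convexOn_mul_log.2 (Set.mem_Ici.mpr hx) (Set.mem_Ici.mpr hy)
    (by norm_num : (0 : ℝ) ≤ 1 / 2) (by norm_num : (0 : ℝ) ≤ 1 / 2) (by norm_num)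
  have hmid : 1 / 2 * x + 1 / 2 * y = (x + y) / 2 := by ring
  simp only [smul_eq_mul, hmid] at hconv
  calc ((x + y) / 2) ^ ((x + y) / 2) = exp ((x + y) / 2 * log ((x + y) / 2) * 1) := by
        rw [← rpow_self_mul_eq_exp (by positivity), mul_one]
    _ ≤ exp (x * log x * (1 / 2) + y * log y * (1 / 2)) := exp_le_exp.2 (by linarith)
    _ = x ^ (x / 2) * y ^ (y / 2) := by
      rw [exp_add, ← rpow_self_mul_eq_exp hx, ← rpow_self_mul_eq_exp hy, mul_one_div, mul_one_div]

theorem Real.add_rpow_half_add_le {x y : ℝ} (hx : 0 ≤ x) (hy : 0 ≤ y) :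
    (x + y) ^ ((x + y) / 2) ≤ x ^ (x / 2) * y ^ (y / 2) * 2 ^ ((x + y) / 2) := by
  calc (x + y) ^ ((x + y) / 2) = ((x + y) / 2) ^ ((x + y) / 2) * 2 ^ ((x + y) / 2) := by
        rw [← mul_rpow (by positivity) zero_le_two, div_mul_cancel₀ _ two_ne_zero]
    _ ≤ _ := by gcongr; exact add_div_two_rpow_add_div_two_le hx hy

theorem stmt_4 (n n' : ℕ) (W Wt : Fin n → ℂ) (W' Wt' : Fin n' → ℂ) (d : ℝ) (hd : 0 < d)
    (hdist : ∀ i j : Fin (n + n'),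
      d ≤ ‖Fin.append W W' i - Fin.append Wt Wt' j‖) :
    ‖(Matrix.det (fun i j : Fin (n + n') =>
          1 / (Fin.append W W' i - Fin.append Wt Wt' j)))‖ ≤
      (n : ℝ) ^ ((n : ℝ) / 2) * (n' : ℝ) ^ ((n' : ℝ) / 2) *
        2 ^ (((n : ℝ) + n') / 2) * d ^ (-((n : ℝ) + n')) := by
  have hentry : ∀ i j : Fin (n + n'),
      ‖1 / (Fin.append W W' i - Fin.append Wt Wt' j)‖ ≤ d⁻¹ := fun i j => by
    rw [norm_div, norm_one, one_div]
    exact inv_anti₀ hd (hdist i j)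
  have hdpow : d ^ (-((n : ℝ) + n')) = d⁻¹ ^ (n + n') := by
    rw [rpow_neg hd.le, ← Nat.cast_add, rpow_natCast, inv_pow]
  calc _ ≤ ((n + n' : ℕ) : ℝ) ^ (((n + n' : ℕ) : ℝ) / 2) * d⁻¹ ^ (n + n') := by
        simpa only [Fintype.card_fin] using Matrix.norm_det_le_of_forall_norm_le _ hentry
    _ ≤ _ := by
      rw [hdpow, Nat.cast_add]
      gcongr
      exact add_rpow_half_add_le n.cast_nonneg n'.cast_nonneg
end

section
/- Let X be an exponential random variable with rate 2 and Z a standard Gaussian random variable independent of X. Then for every α > 0 and every β ∈ ℝ, P(X + √(2α)·Z − 2α ≥ β) = e^{−2β} · P(X + √(2α)·Z − 2α ≥ −β). -/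
open MeasureTheory ProbabilityTheory Real Set
open scoped ENNReal NNReal

/-!
Write `G(s) = P(X ≥ s) = min 1 (e^{-r s})` for the exponential tail, so that
`P(X + Y ≥ t) = E[G(t - Y)]` with `Y ~ N(0, v)`. The tail satisfies `G(s) = e^{-r s} G(-s)`,
and the Gaussian density satisfies `φ(r v - y) = e^{r y - r² v / 2} φ(y)`. Combining the two with
the substitution `y ↦ r v - y` turns `E[G(β + r v / 2 - Y)]` into
`e^{-r β} E[G(-β + r v / 2 - Y)]`; here `r = 2` and `Y = √(2α) Z`, so `v = 2α`.
-/

namespace ProbabilityTheory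

lemma expMeasure_Ici {r : ℝ} (hr : 0 < r) (a : ℝ) :
    expMeasure r (Ici a) = ENNReal.ofReal (min 1 (exp (-(r * a)))) := by
  have := isProbabilityMeasure_expMeasure hr
  have hsingleton : expMeasure r {a} = 0 :=
    withDensity_absolutelyContinuous _ _ (measure_singleton a)
  rw [← measure_congr (Ioi_ae_eq_Ici' hsingleton), ← compl_Iic,
    prob_compl_eq_one_sub measurableSet_Iic, ← ofReal_cdf, cdf_expMeasure_eq hr]
  split_ifs with ha
  · have hexp : exp (-(r * a)) ≤ 1 := exp_le_one_iff.2 (by nlinarith)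
    rw [min_eq_right hexp, ← ENNReal.ofReal_one, ← ENNReal.ofReal_sub _ (sub_nonneg.2 hexp),
      sub_sub_cancel]
  · rw [min_eq_left (one_le_exp_iff.2 (by nlinarith))]
    simp

lemma expMeasure_Ici_eq_mul {r : ℝ} (hr : 0 < r) (a : ℝ) :
    expMeasure r (Ici a) = ENNReal.ofReal (exp (-(r * a))) * expMeasure r (Ici (-a)) := by
  rw [expMeasure_Ici hr, expMeasure_Ici hr, ← ENNReal.ofReal_mul (exp_nonneg _),
    mul_min_of_nonneg _ _ (exp_nonneg _), mul_neg, neg_neg, ← exp_add, neg_add_cancel, exp_zero,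
    mul_one, min_comm]

lemma gaussianPDFReal_mul_sub {v : ℝ≥0} (hv : v ≠ 0) (r y : ℝ) :
    gaussianPDFReal 0 v (r * v - y) = exp (r * y - r ^ 2 * v / 2) * gaussianPDFReal 0 v y := by
  have hv' : (v : ℝ) ≠ 0 := by exact_mod_cast hv
  simp only [gaussianPDFReal, sub_zero]
  rw [mul_left_comm, ← exp_add]
  congr 2
  field_simp
  ring

lemma lintegral_gaussianReal_mul_sub {v : ℝ≥0} (hv : v ≠ 0) (r : ℝ) (f : ℝ → ℝ≥0∞) :
    ∫⁻ y, f (r * v - y) ∂gaussianReal 0 v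
      = ∫⁻ y, ENNReal.ofReal (exp (r * y - r ^ 2 * v / 2)) * f y ∂gaussianReal 0 v := by
  simp only [gaussianReal_of_var_ne_zero 0 hv,
    lintegral_withDensity_eq_lintegral_mul_non_measurable _ (measurable_gaussianPDF 0 v)
      (ae_of_all _ fun _ => gaussianPDF_lt_top)]
  rw [← lintegral_sub_left_eq_self _ (r * v)]
  refine lintegral_congr fun y => ?_
  simp only [Pi.mul_apply, sub_sub_cancel, gaussianPDF, gaussianPDFReal_mul_sub hv,
    ENNReal.ofReal_mul (exp_nonneg _)]
  ring

lemma lintegral_expMeasure_Ici_gaussianReal {r : ℝ} (hr : 0 < r) {v : ℝ≥0} (hv : v ≠ 0)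
    (β : ℝ) :
    ∫⁻ y, expMeasure r (Ici (β + r * v / 2 - y)) ∂gaussianReal 0 v
      = ENNReal.ofReal (exp (-(r * β)))
          * ∫⁻ y, expMeasure r (Ici (-β + r * v / 2 - y)) ∂gaussianReal 0 v := by
  calc ∫⁻ y, expMeasure r (Ici (β + r * v / 2 - y)) ∂gaussianReal 0 v
      = ∫⁻ y, ENNReal.ofReal (exp (-(r * β))) * (ENNReal.ofReal (exp (r * y - r ^ 2 * v / 2))
          * expMeasure r (Ici (y - (β + r * v / 2)))) ∂gaussianReal 0 v := by
        refine lintegral_congr fun y => ?_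
        rw [expMeasure_Ici_eq_mul hr, ← mul_assoc, ← ENNReal.ofReal_mul (exp_nonneg _),
          ← exp_add, neg_sub]
        ring_nf
    _ = ENNReal.ofReal (exp (-(r * β)))
          * ∫⁻ y, expMeasure r (Ici (r * v - y - (β + r * v / 2))) ∂gaussianReal 0 v := by
        rw [lintegral_const_mul' _ _ ENNReal.ofReal_ne_top,
          lintegral_gaussianReal_mul_sub hv r (fun y => expMeasure r (Ici (y - (β + r * v / 2))))]
    _ = _ := by
        ring_nf

lemma measure_le_add_eq_lintegral {Ω : Type*} [MeasurableSpace Ω] {μ : Measure Ω}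
    [IsFiniteMeasure μ] {X Y : Ω → ℝ} (hX : AEMeasurable X μ) (hY : AEMeasurable Y μ)
    (hXY : IndepFun X Y μ) (t : ℝ) :
    μ {ω | t ≤ X ω + Y ω} = ∫⁻ y, μ.map X (Ici (t - y)) ∂μ.map Y := by
  have hmeas : MeasurableSet {p : ℝ × ℝ | t ≤ p.1 + p.2} :=
    measurableSet_le measurable_const (measurable_fst.add measurable_snd)
  change μ ((fun ω => (X ω, Y ω)) ⁻¹' {p : ℝ × ℝ | t ≤ p.1 + p.2}) = _
  rw [← Measure.map_apply_of_aemeasurable (hX.prodMk hY) hmeas,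
    (indepFun_iff_map_prod_eq_prod_map_map hX hY).1 hXY, Measure.prod_apply_symm hmeas]
  congr! with y
  ext x
  simp

theorem measure_le_exp_add_gaussianReal_sub {Ω : Type*} [MeasurableSpace Ω] {μ : Measure Ω}
    [IsProbabilityMeasure μ] {X Y : Ω → ℝ} {r : ℝ} (hr : 0 < r) {v : ℝ≥0} (hv : v ≠ 0)
    (hX : HasLaw X (expMeasure r) μ) (hY : HasLaw Y (gaussianReal 0 v) μ)
    (hXY : IndepFun X Y μ) (β : ℝ) :
    μ {ω | β ≤ X ω + Y ω - r * v / 2}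
      = ENNReal.ofReal (exp (-(r * β))) * μ {ω | -β ≤ X ω + Y ω - r * v / 2} := by
  simp only [le_sub_iff_add_le]
  rw [measure_le_add_eq_lintegral hX.aemeasurable hY.aemeasurable hXY,
    measure_le_add_eq_lintegral hX.aemeasurable hY.aemeasurable hXY, hX.map_eq, hY.map_eq,
    lintegral_expMeasure_Ici_gaussianReal hr hv]

end ProbabilityTheory

theorem stmt_9 {Ω : Type*} [MeasurableSpace Ω] (μ : Measure Ω) [IsProbabilityMeasure μ]
    (X Z : Ω → ℝ) (hX : Measurable X) (hZ : Measurable Z)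
    (hXlaw : μ.map X = expMeasure 2)
    (hZlaw : μ.map Z = gaussianReal 0 1)
    (hindep : IndepFun X Z μ)
    (α β : ℝ) (hα : 0 < α) :
    (μ {ω | β ≤ X ω + Real.sqrt (2 * α) * Z ω - 2 * α}).toReal =
      Real.exp (-2 * β) *
        (μ {ω | -β ≤ X ω + Real.sqrt (2 * α) * Z ω - 2 * α}).toReal := by
  have hY := gaussianReal_const_mul ⟨hZ.aemeasurable, hZlaw⟩ √(2 * α)
  rw [mul_zero, mul_one] at hY
  have hv : (NNReal.mk (√(2 * α) ^ 2) (sq_nonneg _) : ℝ) = 2 * α := Real.sq_sqrt (by positivity)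
  have hsym := measure_le_exp_add_gaussianReal_sub two_pos
    (NNReal.coe_ne_zero.1 (by rw [hv]; positivity)) ⟨hX.aemeasurable, hXlaw⟩ hY
    (hindep.comp measurable_id (measurable_const_mul _)) β
  rw [hv, mul_div_cancel_left₀ _ two_ne_zero] at hsym
  rw [hsym, ENNReal.toReal_mul, ENNReal.toReal_ofReal (exp_nonneg _), neg_mul]
end

section
/- Fix α, β, τ ∈ ℝ and a complex number u on the contour {r e^{±2πi/3} : r ≥ 0}. With F_L as above, e^{(2/3)L^{3/2}} F_L(−√L + L^{−1/4} u) → exp(u² + α − β + τ/3) as L → +∞. -/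
/-!
Substituting `L = t⁴`, the exponent of `e^{(2/3)L^{3/2}} F_L(−√L + L^{−1/4} u)` becomes a
Laurent polynomial in `t` whose positive powers cancel: it equals `u² + α − β + τ/3` plus a
polynomial without constant term in `s = t⁻³ = L^{−3/4}`. Since `s → 0` as `L → ∞`, continuity
gives the limit.
-/

open Complex Real Filter

/-- The function `F_L(ζ) = exp(−(1/3)(1 + τ L^{−3/2}) ζ³ + (α L^{−1}) ζ² + (L + β L^{−1/2}) ζ)`. -/
noncomputable def FL (τ α β L : ℝ) (ζ : ℂ) : ℂ :=
  Complex.exp (-(1 / 3 : ℂ) * ((1 : ℝ) + τ * L ^ (-(3 : ℝ) / 2) : ℝ) * ζ ^ 3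
    + ((α * L⁻¹ : ℝ) : ℂ) * ζ ^ 2 + ((L + β * L ^ (-(1 : ℝ) / 2) : ℝ) : ℂ) * ζ)

def rescaledCorrection {K : Type*} [Field K] (α β τ u s : K) : K :=
  s * (-(1 / 3) * (1 + τ * s ^ 2) * u ^ 3 + (τ + α) * s * u ^ 2 + (β - τ - 2 * α) * u)

lemma continuous_rescaledCorrection {K : Type*} [Field K] [TopologicalSpace K]
    [IsTopologicalRing K] (α β τ u : K) :
    Continuous (rescaledCorrection α β τ u) := by
  unfold rescaledCorrection
  fun_prop

lemma rescaledCorrection_zero {K : Type*} [Field K] (α β τ u : K) :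
    rescaledCorrection α β τ u 0 = 0 := by
  simp [rescaledCorrection]

lemma rescaled_exponent_eq {K : Type*} [Field K] [CharZero K] (α β τ u : K) {t : K}
    (ht : t ≠ 0) :
    2 / 3 * t ^ 6 + (-(1 / 3) * (1 + τ * t ^ (-6 : ℤ)) * (-t ^ 2 + t ^ (-1 : ℤ) * u) ^ 3
      + α * t ^ (-4 : ℤ) * (-t ^ 2 + t ^ (-1 : ℤ) * u) ^ 2
      + (t ^ 4 + β * t ^ (-2 : ℤ)) * (-t ^ 2 + t ^ (-1 : ℤ) * u))
      = u ^ 2 + α - β + τ / 3 + rescaledCorrection α β τ u (t ^ (-3 : ℤ)) := by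
  simp only [rescaledCorrection, zpow_neg]
  field_simp
  ring

lemma pow_four_rpow_eq_zpow {t : ℝ} (ht : 0 ≤ t) (r : ℝ) (k : ℤ) (hr : r = k / 4) :
    (t ^ 4) ^ r = t ^ k := by
  rw [← rpow_natCast_mul ht, ← rpow_intCast, hr]
  ring_nf

lemma exp_mul_FL_eq (α β τ : ℝ) (u : ℂ) {L : ℝ} (hL : 0 < L) :
    Complex.exp ((2 / 3 : ℂ) * ((L ^ ((3 : ℝ) / 2) : ℝ) : ℂ)) *
        FL τ α β L ((-(Real.sqrt L : ℝ) : ℝ) + ((L ^ (-(1 : ℝ) / 4) : ℝ) : ℂ) * u)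
      = Complex.exp (u ^ 2 + α - β + τ / 3
          + rescaledCorrection (α : ℂ) β τ u ((L ^ (-(3 : ℝ) / 4) : ℝ) : ℂ)) := by
  obtain ⟨t, ht, rfl⟩ : ∃ t > 0, L = t ^ 4 :=
    ⟨L ^ (1 / 4 : ℝ), by positivity, by rw [← rpow_mul_natCast hL.le]; norm_num⟩
  have hpow := pow_four_rpow_eq_zpow ht.le
  have hinv : (t ^ 4)⁻¹ = t ^ (-4 : ℤ) := by simp
  rw [FL, ← Complex.exp_add, sqrt_eq_rpow, hpow (1 / 2) 2 (by norm_num),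
    hpow (3 / 2) 6 (by norm_num), hpow (-3 / 2) (-6) (by norm_num),
    hpow (-1 / 2) (-2) (by norm_num), hpow (-1 / 4) (-1) (by norm_num),
    hpow (-3 / 4) (-3) (by norm_num), hinv]
  push_cast
  congr 1
  exact rescaled_exponent_eq _ _ _ _ (ofReal_ne_zero.mpr ht.ne')

theorem stmt_16_general (α β τ : ℝ) (u : ℂ) :
    Tendsto (fun L : ℝ =>
        Complex.exp ((2 / 3 : ℂ) * ((L ^ ((3 : ℝ) / 2) : ℝ) : ℂ)) *
          FL τ α β L ((-(Real.sqrt L : ℝ) : ℝ) + ((L ^ (-(1 : ℝ) / 4) : ℝ) : ℂ) * u))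
      atTop (nhds (Complex.exp (u ^ 2 + (α : ℂ) - (β : ℂ) + (τ : ℂ) / 3))) := by
  have hs : Tendsto (fun L : ℝ => ((L ^ (-(3 : ℝ) / 4) : ℝ) : ℂ)) atTop (nhds 0) := by
    rw [← ofReal_zero, neg_div]
    exact (continuous_ofReal.tendsto 0).comp (tendsto_rpow_neg_atTop (by norm_num))
  have hlim := ((continuous_rescaledCorrection (α : ℂ) β τ u).tendsto 0).comp hs
  rw [rescaledCorrection_zero] at hlim
  have hexp := (Complex.continuous_exp.tendsto _).comp
    ((tendsto_const_nhds (x := u ^ 2 + (α : ℂ) - β + τ / 3)).add hlim)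
  rw [add_zero] at hexp
  refine hexp.congr' ?_
  filter_upwards [eventually_gt_atTop 0] with L hL
  exact (exp_mul_FL_eq α β τ u hL).symm

theorem stmt_16 (α β τ : ℝ) (u : ℂ)
    (hu : ∃ r : ℝ, 0 ≤ r ∧
      (u = (r : ℂ) * Complex.exp (2 * Real.pi * Complex.I / 3) ∨
       u = (r : ℂ) * Complex.exp (-(2 * Real.pi * Complex.I) / 3))) :
    Tendsto (fun L : ℝ =>
        Complex.exp ((2 / 3 : ℂ) * ((L ^ ((3 : ℝ) / 2) : ℝ) : ℂ)) *
          FL τ α β L ((-(Real.sqrt L : ℝ) : ℝ) + ((L ^ (-(1 : ℝ) / 4) : ℝ) : ℂ) * u))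
      atTop (nhds (Complex.exp (u ^ 2 + (α : ℂ) - (β : ℂ) + (τ : ℂ) / 3))) :=
  stmt_16_general α β τ u
end
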